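/- Let (A, ≺, ≻, α, β) be a BiHom-pre-alternative algebra and R: A → A a Rota-Baxter operator of weight 0 on A commuting with α and β. Define x↘_R y = R(x)≻y, x↗_R y = x≻R(y), x↙_R y = R(x)≺y, x↖_R y = x≺R(y). Then (A, ↖_R, ↙_R, ↗_R, ↘_R, α, β) is a BiHom-alternative quadri-algebra. -/
import Mathlib


variable {K : Type*} [Field K] {A : Type*} [AddCommGroup A] [Module K A]
  {V : Type*} [AddCommGroup V] [Module K V]

/-- The right BiHom-associator of a pair of bilinear operations `p = ≺`, `s = ≻`. -/
def preAsR (p s : A →ₗ[K] A →ₗ[K] A) (α β : A →ₗ[K] A) (x y z : A) : A :=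
  p (p x y) (β z) - p (α x) (p y z + s y z)

/-- The middle BiHom-associator. -/
def preAsM (p s : A →ₗ[K] A →ₗ[K] A) (α β : A →ₗ[K] A) (x y z : A) : A :=
  p (s x y) (β z) - s (α x) (p y z)

/-- The left BiHom-associator. -/
def preAsL (p s : A →ₗ[K] A →ₗ[K] A) (α β : A →ₗ[K] A) (x y z : A) : A :=
  s (p x y + s x y) (β z) - s (α x) (s y z)

/-- A BiHom-pre-alternative algebra structure on `A`, with `p = ≺` and `s = ≻`. -/
structure IsBiHomPreAlternative (p s : A →ₗ[K] A →ₗ[K] A) (α β : A →ₗ[K] A) : Prop where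
  hαβ : ∀ x, α (β x) = β (α x)
  hαp : ∀ x y, α (p x y) = p (α x) (α y)
  hαs : ∀ x y, α (s x y) = s (α x) (α y)
  hβp : ∀ x y, β (p x y) = p (β x) (β y)
  hβs : ∀ x y, β (s x y) = s (β x) (β y)
  hr : ∀ x y z, preAsR p s α β x (β y) (α z) + preAsR p s α β x (β z) (α y) = 0
  hl : ∀ x y z, preAsL p s α β (β x) (α y) z + preAsL p s α β (β y) (α x) z = 0
  hmr : ∀ x y z, preAsM p s α β (β x) (α y) z + preAsR p s α β (β y) (α x) z = 0
  hml : ∀ x y z, preAsM p s α β x (β y) (α z) + preAsL p s α β x (β z) (α y) = 0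
set_option linter.unusedVariables false

/-- Quadri-associator `{x,y,z}^r = (x↖y)↖β(z) − α(x)↖(y∗z)`. -/
def qAsR (nw sw ne se : A →ₗ[K] A →ₗ[K] A) (α β : A →ₗ[K] A) (x y z : A) : A :=
  nw (nw x y) (β z) - nw (α x) (nw y z + sw y z + ne y z + se y z)

/-- Quadri-associator `{x,y,z}^l = (x∗y)↘β(z) − α(x)↘(y↘z)`. -/
def qAsL (nw sw ne se : A →ₗ[K] A →ₗ[K] A) (α β : A →ₗ[K] A) (x y z : A) : A :=
  se (nw x y + sw x y + ne x y + se x y) (β z) - se (α x) (se y z)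

/-- Quadri-associator `{x,y,z}^{ne} = (x∧y)↗β(z) − α(x)↗(y≻z)`. -/
def qAsNE (nw sw ne se : A →ₗ[K] A →ₗ[K] A) (α β : A →ₗ[K] A) (x y z : A) : A :=
  ne (ne x y + nw x y) (β z) - ne (α x) (ne y z + se y z)

/-- Quadri-associator `{x,y,z}^{sw} = (x≺y)↙β(z) − α(x)↙(y∨z)`. -/
def qAsSW (nw sw ne se : A →ₗ[K] A →ₗ[K] A) (α β : A →ₗ[K] A) (x y z : A) : A :=
  sw (nw x y + sw x y) (β z) - sw (α x) (se y z + sw y z)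

/-- Quadri-associator `{x,y,z}^n = (x↗y)↖β(z) − α(x)↗(y≺z)`. -/
def qAsN (nw sw ne se : A →ₗ[K] A →ₗ[K] A) (α β : A →ₗ[K] A) (x y z : A) : A :=
  nw (ne x y) (β z) - ne (α x) (nw y z + sw y z)

/-- Quadri-associator `{x,y,z}^w = (x↙y)↖β(z) − α(x)↙(y∧z)`. -/
def qAsW (nw sw ne se : A →ₗ[K] A →ₗ[K] A) (α β : A →ₗ[K] A) (x y z : A) : A :=
  nw (sw x y) (β z) - sw (α x) (ne y z + nw y z)

/-- Quadri-associator `{x,y,z}^s = (x≻y)↙β(z) − α(x)↘(y↙z)`. -/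
def qAsS (nw sw ne se : A →ₗ[K] A →ₗ[K] A) (α β : A →ₗ[K] A) (x y z : A) : A :=
  sw (ne x y + se x y) (β z) - se (α x) (sw y z)

/-- Quadri-associator `{x,y,z}^e = (x∨y)↗β(z) − α(x)↘(y↗z)`. -/
def qAsE (nw sw ne se : A →ₗ[K] A →ₗ[K] A) (α β : A →ₗ[K] A) (x y z : A) : A :=
  ne (se x y + sw x y) (β z) - se (α x) (ne y z)

/-- Quadri-associator `{x,y,z}^m = (x↘y)↖β(z) − α(x)↘(y↖z)`. -/
def qAsM (nw sw ne se : A →ₗ[K] A →ₗ[K] A) (α β : A →ₗ[K] A) (x y z : A) : A :=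
  nw (se x y) (β z) - se (α x) (nw y z)

/-- A BiHom-alternative quadri-algebra structure on `A`,
with operations `nw = ↖`, `sw = ↙`, `ne = ↗`, `se = ↘`. -/
structure IsBiHomAltQuadri (nw sw ne se : A →ₗ[K] A →ₗ[K] A) (α β : A →ₗ[K] A) : Prop where
  hαβ : ∀ x, α (β x) = β (α x)
  hαnw : ∀ x y, α (nw x y) = nw (α x) (α y)
  hαsw : ∀ x y, α (sw x y) = sw (α x) (α y)
  hαne : ∀ x y, α (ne x y) = ne (α x) (α y)
  hαse : ∀ x y, α (se x y) = se (α x) (α y)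
  hβnw : ∀ x y, β (nw x y) = nw (β x) (β y)
  hβsw : ∀ x y, β (sw x y) = sw (β x) (β y)
  hβne : ∀ x y, β (ne x y) = ne (β x) (β y)
  hβse : ∀ x y, β (se x y) = se (β x) (β y)
  ax1 : ∀ x y z, qAsR nw sw ne se α β (β x) (α y) z + qAsM nw sw ne se α β (β y) (α x) z = 0
  ax2 : ∀ x y z, qAsN nw sw ne se α β (β x) (α y) z + qAsW nw sw ne se α β (β y) (α x) z = 0
  ax3 : ∀ x y z, qAsNE nw sw ne se α β (β x) (α y) z + qAsE nw sw ne se α β (β y) (α x) z = 0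
  ax4 : ∀ x y z, qAsSW nw sw ne se α β (β x) (α y) z + qAsS nw sw ne se α β (β y) (α x) z = 0
  ax5 : ∀ x y z, qAsL nw sw ne se α β (β x) (α y) z + qAsL nw sw ne se α β (β y) (α x) z = 0
  ax6 : ∀ x y z, qAsR nw sw ne se α β x (β y) (α z) + qAsR nw sw ne se α β x (β z) (α y) = 0
  ax7 : ∀ x y z, qAsN nw sw ne se α β x (β y) (α z) + qAsNE nw sw ne se α β x (β z) (α y) = 0
  ax8 : ∀ x y z, qAsW nw sw ne se α β x (β y) (α z) + qAsSW nw sw ne se α β x (β z) (α y) = 0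
  ax9 : ∀ x y z, qAsM nw sw ne se α β x (β y) (α z) + qAsL nw sw ne se α β x (β z) (α y) = 0
  ax10 : ∀ x y z, qAsS nw sw ne se α β x (β y) (α z) + qAsE nw sw ne se α β x (β z) (α y) = 0

/-- A Rota-Baxter operator of weight 0 on a BiHom-pre-alternative algebra,
commuting with the structure maps, induces a BiHom-alternative quadri-algebra with
`x↘y = R(x)≻y`, `x↗y = x≻R(y)`, `x↙y = R(x)≺y`, `x↖y = x≺R(y)`. -/
theorem rotaBaxter_preAlt_toAltQuadri
    (p s : A →ₗ[K] A →ₗ[K] A) (α β : A →ₗ[K] A) (Rb : A →ₗ[K] A)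
    (hpre : IsBiHomPreAlternative p s α β)
    (hRα : ∀ x, Rb (α x) = α (Rb x))
    (hRβ : ∀ x, Rb (β x) = β (Rb x))
    (hRBs : ∀ x y, s (Rb x) (Rb y) = Rb (s x (Rb y) + s (Rb x) y))
    (hRBp : ∀ x y, p (Rb x) (Rb y) = Rb (p x (Rb y) + p (Rb x) y)) :
    IsBiHomAltQuadri (p.compl₂ Rb) (p.comp Rb) (s.compl₂ Rb) (s.comp Rb) α β := by
  have eR : ∀ x y z, qAsR (p.compl₂ Rb) (p.comp Rb) (s.compl₂ Rb) (s.comp Rb) α β x y z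
      = preAsR p s α β x (Rb y) (Rb z) := by
    intro x y z
    simp only [qAsR, preAsR, LinearMap.compl₂_apply, LinearMap.comp_apply, map_add,
      LinearMap.add_apply, hRα, hRβ, hRBp, hRBs]
    abel
  have eM : ∀ x y z, qAsM (p.compl₂ Rb) (p.comp Rb) (s.compl₂ Rb) (s.comp Rb) α β x y z
      = preAsM p s α β (Rb x) y (Rb z) := by
    intro x y z
    simp only [qAsM, preAsM, LinearMap.compl₂_apply, LinearMap.comp_apply, map_add,
      LinearMap.add_apply, hRα, hRβ, hRBp, hRBs]
  have eL : ∀ x y z, qAsL (p.compl₂ Rb) (p.comp Rb) (s.compl₂ Rb) (s.comp Rb) α β x y z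
      = preAsL p s α β (Rb x) (Rb y) z := by
    intro x y z
    simp only [qAsL, preAsL, LinearMap.compl₂_apply, LinearMap.comp_apply, map_add,
      LinearMap.add_apply, hRα, hRβ, hRBp, hRBs]
    abel
  have eNE : ∀ x y z, qAsNE (p.compl₂ Rb) (p.comp Rb) (s.compl₂ Rb) (s.comp Rb) α β x y z
      = preAsL p s α β x (Rb y) (Rb z) := by
    intro x y z
    simp only [qAsNE, preAsL, LinearMap.compl₂_apply, LinearMap.comp_apply, map_add,
      LinearMap.add_apply, hRα, hRβ, hRBp, hRBs]
    abel
  have eSW : ∀ x y z, qAsSW (p.compl₂ Rb) (p.comp Rb) (s.compl₂ Rb) (s.comp Rb) α β x y z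
      = preAsR p s α β (Rb x) (Rb y) z := by
    intro x y z
    simp only [qAsSW, preAsR, LinearMap.compl₂_apply, LinearMap.comp_apply, map_add,
      LinearMap.add_apply, hRα, hRβ, hRBp, hRBs]
    abel
  have eN : ∀ x y z, qAsN (p.compl₂ Rb) (p.comp Rb) (s.compl₂ Rb) (s.comp Rb) α β x y z
      = preAsM p s α β x (Rb y) (Rb z) := by
    intro x y z
    simp only [qAsN, preAsM, LinearMap.compl₂_apply, LinearMap.comp_apply, map_add,
      LinearMap.add_apply, hRα, hRβ, hRBp, hRBs]
  have eW : ∀ x y z, qAsW (p.compl₂ Rb) (p.comp Rb) (s.compl₂ Rb) (s.comp Rb) α β x y z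
      = preAsR p s α β (Rb x) y (Rb z) := by
    intro x y z
    simp only [qAsW, preAsR, LinearMap.compl₂_apply, LinearMap.comp_apply, map_add,
      LinearMap.add_apply, hRα, hRβ, hRBp, hRBs]
    abel
  have eS : ∀ x y z, qAsS (p.compl₂ Rb) (p.comp Rb) (s.compl₂ Rb) (s.comp Rb) α β x y z
      = preAsM p s α β (Rb x) (Rb y) z := by
    intro x y z
    simp only [qAsS, preAsM, LinearMap.compl₂_apply, LinearMap.comp_apply, map_add,
      LinearMap.add_apply, hRα, hRβ, hRBp, hRBs]
  have eE : ∀ x y z, qAsE (p.compl₂ Rb) (p.comp Rb) (s.compl₂ Rb) (s.comp Rb) α β x y z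
      = preAsL p s α β (Rb x) y (Rb z) := by
    intro x y z
    simp only [qAsE, preAsL, LinearMap.compl₂_apply, LinearMap.comp_apply, map_add,
      LinearMap.add_apply, hRα, hRβ, hRBp, hRBs]
    abel
  refine ⟨hpre.hαβ, ?_, ?_, ?_, ?_, ?_, ?_, ?_, ?_, ?_, ?_, ?_, ?_, ?_, ?_, ?_, ?_, ?_, ?_⟩
  · intro x y
    simp [LinearMap.compl₂_apply, hpre.hαp, hRα]
  · intro x y
    simp [LinearMap.comp_apply, hpre.hαp, hRα]
  · intro x y
    simp [LinearMap.compl₂_apply, hpre.hαs, hRα]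
  · intro x y
    simp [LinearMap.comp_apply, hpre.hαs, hRα]
  · intro x y
    simp [LinearMap.compl₂_apply, hpre.hβp, hRβ]
  · intro x y
    simp [LinearMap.comp_apply, hpre.hβp, hRβ]
  · intro x y
    simp [LinearMap.compl₂_apply, hpre.hβs, hRβ]
  · intro x y
    simp [LinearMap.comp_apply, hpre.hβs, hRβ]
  · intro x y z
    rw [eR, eM]; simp only [hRα, hRβ]; rw [add_comm]
    exact hpre.hmr (Rb y) x (Rb z)
  · intro x y z
    rw [eN, eW]; simp only [hRα, hRβ]
    exact hpre.hmr x (Rb y) (Rb z)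
  · intro x y z
    rw [eNE, eE]; simp only [hRα, hRβ]
    exact hpre.hl x (Rb y) (Rb z)
  · intro x y z
    rw [eSW, eS]; simp only [hRα, hRβ]; rw [add_comm]
    exact hpre.hmr (Rb y) (Rb x) z
  · intro x y z
    rw [eL, eL]; simp only [hRα, hRβ]
    exact hpre.hl (Rb x) (Rb y) z
  · intro x y z
    rw [eR, eR]; simp only [hRα, hRβ]
    exact hpre.hr x (Rb y) (Rb z)
  · intro x y z
    rw [eN, eNE]; simp only [hRα, hRβ]
    exact hpre.hml x (Rb y) (Rb z)
  · intro x y z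
    rw [eW, eSW]; simp only [hRα, hRβ]
    exact hpre.hr (Rb x) y (Rb z)
  · intro x y z
    rw [eM, eL]; simp only [hRα, hRβ]
    exact hpre.hml (Rb x) y (Rb z)
  · intro x y z
    rw [eS, eE]; simp only [hRα, hRβ]
    exact hpre.hml (Rb x) (Rb y) z
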